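/- Let λ₁, λ₂ be coprime positive integers, m a positive integer, S = {0, λ₁, λ₁+λ₂} and S' = {0, mλ₁, m(λ₁+λ₂)}. Then d_c(S') = d_c(S) and d_p(S') = d_p(S). -/

import Mathlib

open Filter Set

/-- The translateSet `S + t` of a set of integers. -/
def translateSet (S : Set ℤ) (t : ℤ) : Set ℤ := (· + t) '' S

/-- Upper density of a set of integers. -/
noncomputable def upperDensity (A : Set ℤ) : ℝ :=
  Filter.limsup (fun n : ℕ => ((A ∩ Set.Icc (-(n : ℤ)) (n : ℤ)).ncard : ℝ) / (2 * n + 1)) Filter.atTop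

/-- Lower density of a set of integers. -/
noncomputable def lowerDensity (A : Set ℤ) : ℝ :=
  Filter.liminf (fun n : ℕ => ((A ∩ Set.Icc (-(n : ℤ)) (n : ℤ)).ncard : ℝ) / (2 * n + 1)) Filter.atTop

/-- `A` is `S`-covering: every integer lies in some translateSet `S + a`, `a ∈ A`. -/
def SCovering (S A : Set ℤ) : Prop := ∀ t : ℤ, ∃ a ∈ A, t ∈ translateSet S a

/-- `A` is `S`-blocking: `A` meets every translateSet of `S`. -/
def SBlocking (S A : Set ℤ) : Prop := ∀ t : ℤ, (A ∩ translateSet S t).Nonempty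

/-- `A` is `S`-free: `A` contains no translateSet of `S`. -/
def SFree (S A : Set ℤ) : Prop := ∀ t : ℤ, ¬ translateSet S t ⊆ A

/-- `A` is `S`-packing: distinct translates `S + a₁`, `S + a₂` with `a₁, a₂ ∈ A` are disjoint. -/
def SPacking (S A : Set ℤ) : Prop :=
  ∀ a₁ ∈ A, ∀ a₂ ∈ A, a₁ ≠ a₂ → Disjoint (translateSet S a₁) (translateSet S a₂)

/-- Maximum packing density of `S`. -/
noncomputable def dP (S : Set ℤ) : ℝ := sSup (upperDensity '' {A | SPacking S A})

/-- Minimum covering density of `S`. -/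
noncomputable def dC (S : Set ℤ) : ℝ := sInf (lowerDensity '' {A | SCovering S A})

/-- Minimum blocking density of `S`. -/
noncomputable def dB (S : Set ℤ) : ℝ := sInf (lowerDensity '' {A | SBlocking S A})

/-- `d_f(S)`: supremum of upper densities of `S`-free sets. -/
noncomputable def dF (S : Set ℤ) : ℝ := sSup (upperDensity '' {A | SFree S A})

/-- `d_f(S, -S)`: supremum of upper densities of sets free of translates of both `S` and `-S`. -/
noncomputable def dF2 (S : Set ℤ) : ℝ := sSup (upperDensity '' {A | SFree S A ∧ SFree (-S) A})

/-!
Split a set `A ⊆ ℤ` by residues mod `M` into the slices `A_r = {y | M y + r ∈ A}`. Every slice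
of an `MS`-covering (packing) set is an `S`-covering (packing) set, and conversely an
`S`-covering (packing) set `A` inflates to the `MS`-covering (packing) set `{x | ⌊x / M⌋ ∈ A}`.
Counting in windows, the density of `A` at `n` is, up to `O(M / n)`, the average of the
densities of its slices at `⌊n / M⌋`. Hence the lower (upper) density of `A` is at least
(at most) that of its worst slice, and inflation preserves both densities.
-/

open scoped Topology

theorem Filter.liminf_eq_of_tendsto_sub {ι : Type*} {l : Filter ι} [l.NeBot] {u v : ι → ℝ}
    (hv_le : IsBoundedUnder (· ≤ ·) l v) (hv_ge : IsBoundedUnder (· ≥ ·) l v)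
    (h : Tendsto (u - v) l (𝓝 0)) : liminf u l = liminf v l := by
  rw [← sub_add_cancel u v]
  apply le_antisymm
  · calc liminf (u - v + v) l ≤ limsup (u - v) l + liminf v l :=
          liminf_add_le h.isBoundedUnder_ge h.isBoundedUnder_le hv_ge hv_le.isCoboundedUnder_ge
      _ = liminf v l := by rw [h.limsup_eq, zero_add]
  · calc liminf v l = liminf (u - v) l + liminf v l := by rw [h.liminf_eq, zero_add]
      _ ≤ liminf (u - v + v) l :=
          le_liminf_add h.isBoundedUnder_ge h.isBoundedUnder_le hv_ge hv_le.isCoboundedUnder_ge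

theorem Filter.liminf_comp_div_nat {α : Type*} [ConditionallyCompleteLattice α] (u : ℕ → α)
    {M : ℕ} (hM : 0 < M) :
    liminf (fun n => u (n / M)) atTop = liminf u atTop := by
  rw [← Function.comp_def, liminf_comp, map_div_atTop_eq_nat M hM]

theorem abs_div_sub_div_le {a d N K M : ℝ} (hN : 0 < N) (hM : 0 < M) (had : |a - d * K| ≤ 1)
    (hd₀ : 0 ≤ d) (hd₁ : d ≤ 1) (hMK : |M * K - N| ≤ M) : |a / N - d / M| ≤ 2 / N := by
  have hsplit : a / N - d / M = (a - d * K) / N + d * ((M * K - N) / (N * M)) := by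
    field_simp; ring
  have hscale : |(M * K - N) / (N * M)| ≤ 1 / N := by
    rw [abs_div, abs_of_pos (mul_pos hN hM), div_le_div_iff₀ (mul_pos hN hM) hN]
    nlinarith
  calc |a / N - d / M| ≤ |a - d * K| / N + d * |(M * K - N) / (N * M)| := by
        rw [hsplit]; refine (abs_add_le _ _).trans_eq ?_
        rw [abs_div, abs_of_pos hN, abs_mul, abs_of_nonneg hd₀]
    _ ≤ 1 / N + 1 * (1 / N) := by gcongr
    _ = 2 / N := by ring

noncomputable def densitySeq (A : Set ℤ) (n : ℕ) : ℝ :=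
  ((A ∩ Icc (-(n : ℤ)) n).ncard : ℝ) / (2 * n + 1)

theorem lowerDensity_eq_liminf (A : Set ℤ) : lowerDensity A = liminf (densitySeq A) atTop := rfl

theorem upperDensity_eq_limsup (A : Set ℤ) : upperDensity A = limsup (densitySeq A) atTop := rfl

theorem densitySeq_nonneg (A : Set ℤ) (n : ℕ) : 0 ≤ densitySeq A n := by
  unfold densitySeq; positivity

theorem densitySeq_add_densitySeq_compl (A : Set ℤ) (n : ℕ) :
    densitySeq A n + densitySeq Aᶜ n = 1 := by
  have hwindow : (Icc (-(n : ℤ)) n).ncard = 2 * n + 1 := by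
    rw [← Finset.coe_Icc, ncard_coe_finset, Int.card_Icc]; omega
  have hsplit := ncard_inter_add_ncard_sdiff_eq_ncard (Icc (-(n : ℤ)) n) A (finite_Icc _ _)
  rw [hwindow, sdiff_eq, inter_comm, inter_comm _ Aᶜ] at hsplit
  rw [densitySeq, densitySeq, ← add_div, ← Nat.cast_add, hsplit, div_eq_one_iff_eq (by positivity)]
  push_cast; ring

theorem densitySeq_le_one (A : Set ℤ) (n : ℕ) : densitySeq A n ≤ 1 := by
  linarith [densitySeq_add_densitySeq_compl A n, densitySeq_nonneg Aᶜ n]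

theorem isBoundedUnder_le_densitySeq {α : Type*} (l : Filter α) (A : Set ℤ) (g : α → ℕ) :
    IsBoundedUnder (· ≤ ·) l (fun x => densitySeq A (g x)) :=
  isBoundedUnder_of ⟨1, fun _ => densitySeq_le_one _ _⟩

theorem isBoundedUnder_ge_densitySeq {α : Type*} (l : Filter α) (A : Set ℤ) (g : α → ℕ) :
    IsBoundedUnder (· ≥ ·) l (fun x => densitySeq A (g x)) :=
  isBoundedUnder_of ⟨0, fun _ => densitySeq_nonneg _ _⟩

theorem lowerDensity_nonneg (A : Set ℤ) : 0 ≤ lowerDensity A :=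
  le_liminf_of_le (isBoundedUnder_le_densitySeq _ A id).isCoboundedUnder_ge
    (Eventually.of_forall (densitySeq_nonneg A))

theorem upperDensity_eq_one_sub_lowerDensity_compl (A : Set ℤ) :
    upperDensity A = 1 - lowerDensity Aᶜ := by
  have : densitySeq A = fun n => 1 - densitySeq Aᶜ n := by
    funext n; linarith [densitySeq_add_densitySeq_compl A n]
  rw [upperDensity_eq_limsup, lowerDensity_eq_liminf, this, limsup_const_sub]
  · exact (isBoundedUnder_le_densitySeq _ Aᶜ id).isCoboundedUnder_ge
  · exact isBoundedUnder_ge_densitySeq _ Aᶜ id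

theorem upperDensity_le_one (A : Set ℤ) : upperDensity A ≤ 1 := by
  rw [upperDensity_eq_one_sub_lowerDensity_compl]; linarith [lowerDensity_nonneg Aᶜ]

def residueSlice (M : ℕ) (A : Set ℤ) (r : ℕ) : Set ℤ := (fun y => (M : ℤ) * y + r) ⁻¹' A

/-- `inflate M A = ⋃ r < M, (M • A + r)`: every point of `A` becomes a block of `M` consecutive
integers. -/
def inflate (M : ℕ) (A : Set ℤ) : Set ℤ := (· / (M : ℤ)) ⁻¹' A

section Counting

variable {M r : ℕ}

theorem mul_add_emod_of_lt (hr : r < M) (y : ℤ) : ((M : ℤ) * y + r) % M = r := by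
  rw [Int.mul_add_emod_self_left]; exact Int.emod_eq_of_lt (by positivity) (by exact_mod_cast hr)

theorem ncard_eq_sum_ncard_preimage_mul_add (hM : 0 < M) {T : Set ℤ} (hT : T.Finite) :
    T.ncard = ∑ r ∈ Finset.range M, ((fun y => (M : ℤ) * y + r) ⁻¹' T).ncard := by
  classical
  lift T to Finset ℤ using hT
  have hmaps : (T : Set ℤ).MapsTo (fun x : ℤ => (x % M).toNat) (Finset.range M) := fun x _ => by
    have := Int.emod_lt_of_pos x (by exact_mod_cast hM : (0 : ℤ) < M)
    exact Finset.mem_coe.2 (Finset.mem_range.2 (show (x % (M : ℤ)).toNat < M by omega))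
  rw [ncard_coe_finset, Finset.card_eq_sum_card_fiberwise hmaps]
  refine Finset.sum_congr rfl fun r hr => ?_
  have hr : r < M := Finset.mem_range.mp hr
  set g : ℤ → ℤ := fun y => (M : ℤ) * y + r
  have hfiber : g ⁻¹' T = g ⁻¹' ↑{x ∈ T | (x % (M : ℤ)).toNat = r} := by
    ext y; simp [g, mul_add_emod_of_lt hr]
  have hg : Function.Injective g := fun y z h => by
    simpa [g, hM.ne'] using h
  have hrange : (↑{x ∈ T | (x % (M : ℤ)).toNat = r} : Set ℤ) ⊆ range g := fun x hx => by
    have hx : (x % M).toNat = r := (Finset.mem_filter.mp hx).2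
    refine ⟨x / M, ?_⟩
    have := Int.mul_ediv_add_emod x M
    have := Int.emod_nonneg x (by exact_mod_cast hM.ne' : (M : ℤ) ≠ 0)
    simp only [g]; omega
  rw [hfiber, ncard_preimage_of_injective_subset_range hg hrange, ncard_coe_finset]

theorem ncard_window_eq_sum (hM : 0 < M) (A : Set ℤ) (n : ℕ) :
    (A ∩ Icc (-(n : ℤ)) n).ncard = ∑ r ∈ Finset.range M,
      (residueSlice M A r ∩ (fun y => (M : ℤ) * y + r) ⁻¹' Icc (-(n : ℤ)) n).ncard :=
  ncard_eq_sum_ncard_preimage_mul_add hM ((finite_Icc _ _).inter_of_right _)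

theorem Nat.mul_div_le_and_lt_mul_div_add (hM : 0 < M) (n : ℕ) :
    M * (n / M) ≤ n ∧ n < M * (n / M) + M :=
  ⟨Nat.mul_div_le n M, by simpa [mul_add] using Nat.lt_mul_div_succ n hM⟩

theorem preimage_mul_add_Icc_subset (hr : r < M) (n : ℕ) :
    (fun y => (M : ℤ) * y + r) ⁻¹' Icc (-(n : ℤ)) n ⊆
      insert (-((n / M : ℕ) : ℤ) - 1) (Icc (-((n / M : ℕ) : ℤ)) (n / M : ℕ)) := by
  obtain ⟨hk₁, hk₂⟩ := Nat.mul_div_le_and_lt_mul_div_add (by omega : 0 < M) n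
  generalize n / M = k at hk₁ hk₂ ⊢
  zify at hk₁ hk₂
  have hr' : (r : ℤ) < M := by exact_mod_cast hr
  intro y hy
  simp only [mem_preimage, mem_Icc] at hy
  have hy₁ : y ≤ k := by nlinarith
  have hy₂ : -(k : ℤ) - 1 ≤ y := by nlinarith
  rw [mem_insert_iff, mem_Icc]
  omega

theorem Icc_subset_preimage_mul_add (hr : r < M) (n : ℕ) :
    Icc (-((n / M : ℕ) : ℤ)) (n / M : ℕ) ⊆
      insert ((n / M : ℕ) : ℤ) ((fun y => (M : ℤ) * y + r) ⁻¹' Icc (-(n : ℤ)) n) := by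
  obtain ⟨hk₁, hk₂⟩ := Nat.mul_div_le_and_lt_mul_div_add (by omega : 0 < M) n
  generalize n / M = k at hk₁ hk₂ ⊢
  zify at hk₁ hk₂
  have hr' : (r : ℤ) < M := by exact_mod_cast hr
  rintro y ⟨hlo, hhi⟩
  rw [mem_insert_iff, mem_preimage, mem_Icc]
  rcases eq_or_lt_of_le hhi with hy | hy
  · exact .inl hy
  · right; constructor <;> nlinarith

theorem abs_ncard_preimage_window_sub_le (hr : r < M) (B : Set ℤ) (n : ℕ) :
    |((B ∩ (fun y => (M : ℤ) * y + r) ⁻¹' Icc (-(n : ℤ)) n).ncard : ℝ) -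
      (B ∩ Icc (-((n / M : ℕ) : ℤ)) (n / M : ℕ)).ncard| ≤ 1 := by
  set P := B ∩ (fun y => (M : ℤ) * y + r) ⁻¹' Icc (-(n : ℤ)) n
  set Q := B ∩ Icc (-((n / M : ℕ) : ℤ)) (n / M : ℕ)
  have hPQ : P ⊆ insert (-((n / M : ℕ) : ℤ) - 1) Q := fun y hy =>
    (preimage_mul_add_Icc_subset hr n hy.2).imp_right (⟨hy.1, ·⟩)
  have hQP : Q ⊆ insert ((n / M : ℕ) : ℤ) P := fun y hy =>
    (Icc_subset_preimage_mul_add hr n hy.2).imp_right (⟨hy.1, ·⟩)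
  have hQ : Q.Finite := (finite_Icc _ _).inter_of_right _
  have hP : P.Finite := (hQ.insert _).subset hPQ
  rw [abs_sub_le_iff]
  constructor
  · have : P.ncard ≤ Q.ncard + 1 :=
      (ncard_le_ncard hPQ (hQ.insert _)).trans (ncard_insert_le _ _)
    exact sub_left_le_of_le_add (by exact_mod_cast this)
  · have : Q.ncard ≤ P.ncard + 1 :=
      (ncard_le_ncard hQP (hP.insert _)).trans (ncard_insert_le _ _)
    exact sub_left_le_of_le_add (by exact_mod_cast this)

theorem abs_densitySeq_sub_average_le (hM : 0 < M) (A : Set ℤ) (n : ℕ) :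
    |densitySeq A n - (∑ r ∈ Finset.range M, densitySeq (residueSlice M A r) (n / M)) / M| ≤
      2 * M / (2 * n + 1) := by
  have hMK : |(M : ℝ) * (2 * (n / M : ℕ) + 1) - (2 * n + 1)| ≤ M := by
    obtain ⟨hk₁, hk₂⟩ := Nat.mul_div_le_and_lt_mul_div_add hM n
    have h₁ : (M : ℝ) * (n / M : ℕ) ≤ n := by exact_mod_cast hk₁
    have h₂ : (n : ℝ) + 1 ≤ M * (n / M : ℕ) + M := by exact_mod_cast hk₂
    rw [abs_le]; constructor <;> linarith
  have hsum : densitySeq A n = ∑ r ∈ Finset.range M,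
      ((residueSlice M A r ∩ (fun y => (M : ℤ) * y + r) ⁻¹' Icc (-(n : ℤ)) n).ncard : ℝ) /
        (2 * n + 1) := by
    rw [densitySeq, ncard_window_eq_sum hM, Nat.cast_sum, Finset.sum_div]
  rw [hsum, Finset.sum_div, ← Finset.sum_sub_distrib]
  calc _ ≤ ∑ r ∈ Finset.range M, 2 / (2 * (n : ℝ) + 1) := by
        refine (Finset.abs_sum_le_sum_abs _ _).trans (Finset.sum_le_sum fun r hr => ?_)
        refine abs_div_sub_div_le (by positivity) (by exact_mod_cast hM) ?_
          (densitySeq_nonneg _ _) (densitySeq_le_one _ _) hMK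
        rw [densitySeq, div_mul_cancel₀ _ (by positivity)]
        exact abs_ncard_preimage_window_sub_le (Finset.mem_range.mp hr) _ n
    _ = 2 * M / (2 * n + 1) := by rw [Finset.sum_const, Finset.card_range, nsmul_eq_mul]; ring

theorem tendsto_densitySeq_sub_average (hM : 0 < M) (A : Set ℤ) :
    Tendsto (fun n => densitySeq A n -
      (∑ r ∈ Finset.range M, densitySeq (residueSlice M A r) (n / M)) / M) atTop (𝓝 0) := by
  refine squeeze_zero_norm (abs_densitySeq_sub_average_le hM A) ?_
  exact tendsto_const_nhds.div_atTop <|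
    (tendsto_natCast_atTop_atTop.const_mul_atTop two_pos).atTop_add tendsto_const_nhds

end Counting

section Density

variable {M : ℕ}

theorem residueSlice_inflate {r : ℕ} (hr : r < M) (A : Set ℤ) :
    residueSlice M (inflate M A) r = A := by
  ext y
  have hr0 : (r : ℤ) / M = 0 := Int.ediv_eq_zero_of_lt (by positivity) (by exact_mod_cast hr)
  simp [residueSlice, inflate, Int.mul_add_ediv_left _ _ (by omega : (M : ℤ) ≠ 0), hr0]

theorem lowerDensity_inflate (hM : 0 < M) (A : Set ℤ) :
    lowerDensity (inflate M A) = lowerDensity A := by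
  have havg : ∀ n : ℕ, (∑ r ∈ Finset.range M,
      densitySeq (residueSlice M (inflate M A) r) (n / M)) / M = densitySeq A (n / M) := by
    intro n
    rw [Finset.sum_congr rfl fun r hr => by rw [residueSlice_inflate (Finset.mem_range.1 hr)],
      Finset.sum_const, Finset.card_range, nsmul_eq_mul, mul_div_cancel_left₀ _ (by positivity)]
  have h := tendsto_densitySeq_sub_average hM (inflate M A)
  simp only [havg] at h
  rw [lowerDensity_eq_liminf, liminf_eq_of_tendsto_sub (isBoundedUnder_le_densitySeq _ A _)
    (isBoundedUnder_ge_densitySeq _ A _) h, liminf_comp_div_nat _ hM, lowerDensity_eq_liminf]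

theorem upperDensity_inflate (hM : 0 < M) (A : Set ℤ) :
    upperDensity (inflate M A) = upperDensity A := by
  rw [upperDensity_eq_one_sub_lowerDensity_compl, upperDensity_eq_one_sub_lowerDensity_compl,
    ← lowerDensity_inflate hM Aᶜ]
  rfl

theorem le_lowerDensity_of_forall_residueSlice (hM : 0 < M) {A : Set ℤ} {c : ℝ}
    (h : ∀ r < M, c ≤ lowerDensity (residueSlice M A r)) : c ≤ lowerDensity A := by
  refine le_of_forall_pos_le_add fun ε hε => ?_
  set avg := fun n : ℕ => (∑ r ∈ Finset.range M, densitySeq (residueSlice M A r) (n / M)) / M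
  have hslices : ∀ᶠ n in atTop, c - ε / 2 < avg n := by
    have : ∀ᶠ n in atTop, ∀ r ∈ Finset.range M,
        c - ε / 2 < densitySeq (residueSlice M A r) (n / M) :=
      Tendsto.eventually (map_div_atTop_eq_nat M hM).le <| (eventually_all_finset _).2 fun r hr =>
        eventually_lt_of_lt_liminf ((h r (Finset.mem_range.1 hr)).trans_lt' (by linarith))
          (isBoundedUnder_ge_densitySeq _ _ id)
    filter_upwards [this] with n hn
    rw [lt_div_iff₀ (by positivity)]
    calc (c - ε / 2) * M = ∑ _r ∈ Finset.range M, (c - ε / 2) := by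
          rw [Finset.sum_const, Finset.card_range, nsmul_eq_mul, mul_comm]
      _ < _ := Finset.sum_lt_sum_of_nonempty (Finset.nonempty_range_iff.2 hM.ne') hn
  have herr : ∀ᶠ n in atTop, -(ε / 2) < densitySeq A n - avg n :=
    (tendsto_order.1 (tendsto_densitySeq_sub_average hM A)).1 _ (by linarith)
  have : c - ε ≤ lowerDensity A := by
    rw [lowerDensity_eq_liminf]
    exact le_liminf_of_le (isBoundedUnder_le_densitySeq _ A id).isCoboundedUnder_ge
        (by filter_upwards [hslices, herr] with n h₁ h₂; linarith)
  linarith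

theorem upperDensity_le_of_forall_residueSlice (hM : 0 < M) {A : Set ℤ} {c : ℝ}
    (h : ∀ r < M, upperDensity (residueSlice M A r) ≤ c) : upperDensity A ≤ c := by
  have := le_lowerDensity_of_forall_residueSlice hM (A := Aᶜ) (c := 1 - c) fun r hr => by
    have := h r hr
    rw [upperDensity_eq_one_sub_lowerDensity_compl] at this
    exact le_of_sub_nonneg (by linarith : 0 ≤ lowerDensity (residueSlice M A r)ᶜ - (1 - c))
  rw [upperDensity_eq_one_sub_lowerDensity_compl]
  linarith

end Density

theorem mem_translateSet_iff {S : Set ℤ} {t x : ℤ} : x ∈ translateSet S t ↔ x - t ∈ S := by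
  simp [translateSet, image_add_right, sub_eq_add_neg]

theorem Set.Nonempty.sCovering_univ {S : Set ℤ} (hS : S.Nonempty) : SCovering S univ := by
  obtain ⟨s, hs⟩ := hS
  exact fun t => ⟨t - s, mem_univ _, by rwa [mem_translateSet_iff, sub_sub_cancel]⟩

theorem sPacking_empty (S : Set ℤ) : SPacking S ∅ := fun _ h => h.elim

section Dilation

variable {M : ℕ} {S A : Set ℤ}

theorem SCovering.inflate (hM : 0 < M) (h : SCovering S A) :
    SCovering (((M : ℤ) * ·) '' S) (inflate M A) := by
  have hM' : (M : ℤ) ≠ 0 := by exact_mod_cast hM.ne'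
  intro t
  obtain ⟨a, ha, has⟩ := h (t / M)
  refine ⟨M * a + t % M, ?_, ?_⟩
  · have : t % M / M = 0 :=
      Int.ediv_eq_zero_of_lt (Int.emod_nonneg t hM') (Int.emod_lt_of_pos t (by omega))
    rwa [_root_.inflate, mem_preimage, Int.mul_add_ediv_left _ _ hM', this, add_zero]
  · rw [mem_translateSet_iff] at has ⊢
    refine ⟨_, has, ?_⟩
    linarith [Int.mul_ediv_add_emod t M]

theorem SPacking.inflate (hM : 0 < M) (h : SPacking S A) :
    SPacking (((M : ℤ) * ·) '' S) (inflate M A) := by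
  have hM' : (M : ℤ) ≠ 0 := by exact_mod_cast hM.ne'
  intro a₁ ha₁ a₂ ha₂ hne
  refine disjoint_left.2 fun x hx₁ hx₂ => ?_
  rw [mem_translateSet_iff] at hx₁ hx₂
  obtain ⟨s₁, hs₁, e₁⟩ := hx₁
  obtain ⟨s₂, hs₂, e₂⟩ := hx₂
  have hquot : ∀ {a s : ℤ}, M * s = x - a → a / M = x / M - s := fun {a s} e => by
    rw [show a = x + M * -s by linarith, Int.add_mul_ediv_left _ _ hM', sub_eq_add_neg]
  by_cases hq : a₁ / M = a₂ / M
  · rw [hquot e₁, hquot e₂, sub_right_inj] at hq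
    subst hq
    exact hne (by linarith)
  · have hmem : ∀ {a s : ℤ}, M * s = x - a → s ∈ S → x / M ∈ translateSet S (a / M) :=
      fun e hs => by rwa [mem_translateSet_iff, hquot e, sub_sub_cancel]
    exact disjoint_left.1 (h _ ha₁ _ ha₂ hq) (hmem e₁ hs₁) (hmem e₂ hs₂)

theorem SCovering.residueSlice (h : SCovering (((M : ℤ) * ·) '' S) A) (r : ℕ) :
    SCovering S (residueSlice M A r) := by
  intro t
  obtain ⟨a, ha, hta⟩ := h (M * t + r)
  rw [mem_translateSet_iff] at hta
  obtain ⟨s, hs, e⟩ := hta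
  refine ⟨t - s, ?_, by rwa [mem_translateSet_iff, sub_sub_cancel]⟩
  rwa [_root_.residueSlice, mem_preimage, show (M : ℤ) * (t - s) + r = a by linarith]

theorem SPacking.residueSlice (hM : 0 < M) (h : SPacking (((M : ℤ) * ·) '' S) A) (r : ℕ) :
    SPacking S (residueSlice M A r) := by
  intro y₁ hy₁ y₂ hy₂ hne
  have hne' : (M : ℤ) * y₁ + r ≠ M * y₂ + r := fun e => hne (by simpa [hM.ne'] using e)
  have hmem : ∀ {x y : ℤ}, x ∈ translateSet S y →
      (M : ℤ) * x + r ∈ translateSet (((M : ℤ) * ·) '' S) (M * y + r) := fun hx => by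
    rw [mem_translateSet_iff] at hx ⊢
    exact ⟨_, hx, by ring⟩
  exact disjoint_left.2 fun x hx₁ hx₂ =>
    disjoint_left.1 (h _ hy₁ _ hy₂ hne') (hmem hx₁) (hmem hx₂)

theorem dC_image_mul (hM : 0 < M) (hS : S.Nonempty) : dC (((M : ℤ) * ·) '' S) = dC S := by
  have hbdd : ∀ T, BddBelow (lowerDensity '' {A | SCovering T A}) :=
    fun T => ⟨0, by rintro _ ⟨A, -, rfl⟩; exact lowerDensity_nonneg A⟩
  have hne : ∀ T : Set ℤ, T.Nonempty → (lowerDensity '' {A | SCovering T A}).Nonempty :=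
    fun T hT => ⟨_, univ, hT.sCovering_univ, rfl⟩
  apply le_antisymm
  · refine le_csInf (hne S hS) ?_
    rintro _ ⟨A, hA, rfl⟩
    rw [← lowerDensity_inflate hM A]
    exact csInf_le (hbdd _) ⟨_, hA.inflate hM, rfl⟩
  · refine le_csInf (hne _ (hS.image _)) ?_
    rintro _ ⟨A, hA, rfl⟩
    exact le_lowerDensity_of_forall_residueSlice hM fun r _ =>
      csInf_le (hbdd S) ⟨_, hA.residueSlice r, rfl⟩

theorem dP_image_mul (hM : 0 < M) (S : Set ℤ) : dP (((M : ℤ) * ·) '' S) = dP S := by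
  have hbdd : ∀ T, BddAbove (upperDensity '' {A | SPacking T A}) :=
    fun T => ⟨1, by rintro _ ⟨A, -, rfl⟩; exact upperDensity_le_one A⟩
  have hne : ∀ T : Set ℤ, (upperDensity '' {A | SPacking T A}).Nonempty :=
    fun T => ⟨_, ∅, sPacking_empty T, rfl⟩
  apply le_antisymm
  · refine csSup_le (hne _) ?_
    rintro _ ⟨A, hA, rfl⟩
    exact upperDensity_le_of_forall_residueSlice hM fun r _ =>
      le_csSup (hbdd S) ⟨_, hA.residueSlice hM r, rfl⟩
  · refine csSup_le (hne S) ?_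
    rintro _ ⟨A, hA, rfl⟩
    rw [← upperDensity_inflate hM A]
    exact le_csSup (hbdd _) ⟨_, hA.inflate hM, rfl⟩

end Dilation

theorem stmt17_general (l1 l2 m : ℤ) (hm : 0 < m) :
    dC ({0, m * l1, m * (l1 + l2)} : Set ℤ) = dC ({0, l1, l1 + l2} : Set ℤ) ∧
    dP ({0, m * l1, m * (l1 + l2)} : Set ℤ) = dP ({0, l1, l1 + l2} : Set ℤ) := by
  lift m to ℕ using hm.le
  have hdilate : ({0, (m : ℤ) * l1, m * (l1 + l2)} : Set ℤ) =
      ((m : ℤ) * ·) '' {0, l1, l1 + l2} := by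
    simp [image_insert_eq, image_singleton]
  rw [hdilate]
  have hm' : 0 < m := by exact_mod_cast hm
  exact ⟨dC_image_mul hm' (insert_nonempty _ _), dP_image_mul hm' _⟩

theorem stmt17 (l1 l2 m : ℤ) (h1 : 0 < l1) (h2 : 0 < l2) (hm : 0 < m)
    (hco : Int.gcd l1 l2 = 1) :
    dC ({0, m * l1, m * (l1 + l2)} : Set ℤ) = dC ({0, l1, l1 + l2} : Set ℤ) ∧
    dP ({0, m * l1, m * (l1 + l2)} : Set ℤ) = dP ({0, l1, l1 + l2} : Set ℤ) :=
  stmt17_general l1 l2 m hm
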